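/- If T and S are power bounded operators, neither of class C_{0·}, and T is similar to S, then γ(A_{T,L}) > 0 holds for some Banach limit L if and only if γ(A_{S,L}) > 0. -/

import Mathlib

/-!
Since `X' S = T X'` and `S X = X T`, the iterates satisfy `‖Tⁿ X' x‖ ≤ ‖X'‖ ‖Sⁿ x‖` and
`‖Sⁿ X u‖ ≤ ‖X‖ ‖Tⁿ u‖`. A Banach limit is monotone on real sequences, so
`⟪A_T X' x, X' x⟫ ≤ ‖X'‖² ⟪A_S x, x⟫` and `⟪A_S X u, X u⟫ ≤ ‖X‖² ⟪A_T u, u⟫`; the second inequality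
gives `X (ker A_T) ⊆ ker A_S`. For `x ⊥ ker A_S` write `X' x = u + v` with `u ∈ ker A_T` and
`v ⊥ ker A_T`. Then `‖x‖ ≤ ‖X‖ ‖v‖` by Pythagoras, and `‖A_T v‖² ≤ ‖A_T‖ ⟪A_T v, v⟫` (write
`A_T = R²` with `R = √A_T`) turns the lower bound of `A_T` on `v` into one of `A_S` on `x`.
The limit `A_S` exists for the same Banach limit because `S` is power bounded.
-/

open ContinuousLinearMap Filter Topology BoundedContinuousFunction

/-- The shift `n ↦ n + 1` as a continuous map on `ℕ`. -/
def natShift : C(ℕ, ℕ) := ⟨fun n => n + 1, continuous_of_discreteTopology⟩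

/-- A Banach limit: a norm-one positive shift-invariant continuous linear functional on
the space of bounded (complex) sequences which extends the ordinary limit functional. -/
structure IsBanachLimit (L : (ℕ →ᵇ ℂ) →L[ℂ] ℂ) : Prop where
  norm_one : ‖L‖ = 1
  lim_eq : ∀ (f : ℕ →ᵇ ℂ) (c : ℂ), Tendsto f atTop (𝓝 c) → L f = c
  pos : ∀ f : ℕ →ᵇ ℂ, (∀ n, 0 ≤ (f n).re ∧ (f n).im = 0) → 0 ≤ (L f).re ∧ (L f).im = 0
  shift_inv : ∀ f : ℕ →ᵇ ℂ, L (f.compContinuous natShift) = L f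

/-- `A` is the `L`-asymptotic limit of `T`: a positive operator whose sesquilinear form is
the `L`-limit of the forms of the self-adjoint iterates `T*^n T^n`. -/
def IsLAsymptoticLimit {H : Type*} [NormedAddCommGroup H] [InnerProductSpace ℂ H]
    [CompleteSpace H] (L : (ℕ →ᵇ ℂ) →L[ℂ] ℂ) (T A : H →L[ℂ] H) : Prop :=
  A.IsPositive ∧ ∀ (x y : H) (f : ℕ →ᵇ ℂ),
    (∀ n : ℕ, f n = (inner ℂ ((adjoint (T ^ n) ∘L T ^ n) x) y : ℂ)) →
      (inner ℂ (A x) y : ℂ) = L f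

open scoped ComplexOrder InnerProductSpace

section Positive

variable {H : Type*} [NormedAddCommGroup H] [InnerProductSpace ℂ H]

theorem ContinuousLinearMap.isPositive_of_inner_nonneg {A : H →L[ℂ] H}
    (hA : ∀ x, 0 ≤ ⟪A x, x⟫_ℂ) : A.IsPositive := by
  refine (isPositive_iff_complex A).2 fun x => ⟨?_, (Complex.nonneg_iff.1 (hA x)).1⟩
  exact Complex.ext (by simp) (by simp [← (Complex.nonneg_iff.1 (hA x)).2])

variable [CompleteSpace H]

namespace ContinuousLinearMap.IsPositive

variable {A : H →L[ℂ] H}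

theorem norm_apply_sq_le (hA : A.IsPositive) (v : H) :
    ‖A v‖ ^ 2 ≤ ‖A‖ * RCLike.re ⟪A v, v⟫_ℂ := by
  have hA0 : 0 ≤ A := (nonneg_iff_isPositive A).2 hA
  set R := CFC.sqrt A
  have hR : R.IsPositive := (nonneg_iff_isPositive R).1 (CFC.sqrt_nonneg A)
  have hRR : R * R = A := CFC.sqrt_mul_sqrt_self A
  have hRnorm : ‖R‖ ^ 2 = ‖A‖ := by rw [CFC.norm_sqrt A, Real.sq_sqrt (norm_nonneg A)]
  have hRv : ‖R v‖ ^ 2 = RCLike.re ⟪A v, v⟫_ℂ := by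
    rw [← hRR, mul_apply_eq_comp, hR.inner_left_eq_inner_right, inner_self_eq_norm_sq]
  calc ‖A v‖ ^ 2 = ‖R (R v)‖ ^ 2 := by rw [← hRR, mul_apply_eq_comp]
    _ ≤ (‖R‖ * ‖R v‖) ^ 2 := by gcongr; exact R.le_opNorm _
    _ = ‖A‖ * RCLike.re ⟪A v, v⟫_ℂ := by rw [mul_pow, hRnorm, hRv]

theorem apply_eq_zero_of_re_inner_le_zero (hA : A.IsPositive) {z : H}
    (hz : RCLike.re ⟪A z, z⟫_ℂ ≤ 0) : A z = 0 := by
  have : ‖A z‖ ^ 2 ≤ 0 :=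
    (hA.norm_apply_sq_le z).trans (mul_nonpos_of_nonneg_of_nonpos (norm_nonneg A) hz)
  exact norm_eq_zero.1 (pow_eq_zero_iff two_ne_zero |>.1 (le_antisymm this (by positivity)))

end ContinuousLinearMap.IsPositive

end Positive

namespace IsBanachLimit

variable {L : (ℕ →ᵇ ℂ) →L[ℂ] ℂ}

theorem nonneg (hL : IsBanachLimit L) {f : ℕ →ᵇ ℂ} (hf : ∀ n, 0 ≤ f n) : 0 ≤ L f :=
  Complex.nonneg_iff.2 <|
    (hL.pos f fun n => (Complex.nonneg_iff.1 (hf n)).imp_right Eq.symm).imp_right Eq.symm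

theorem mono (hL : IsBanachLimit L) {f g : ℕ →ᵇ ℂ} (hfg : ∀ n, f n ≤ g n) : L f ≤ L g := by
  simpa [sub_nonneg] using hL.nonneg (f := g - f) fun n => by simpa using hfg n

end IsBanachLimit

section AsymptoticLimit

variable {H : Type*} [NormedAddCommGroup H] [InnerProductSpace ℂ H]

theorem norm_inner_pow_apply_le (T : H →L[ℂ] H) {C : ℝ} (hC : ∀ n : ℕ, ‖T ^ n‖ ≤ C)
    (x y : H) (n : ℕ) : ‖⟪(T ^ n) x, (T ^ n) y⟫_ℂ‖ ≤ C * ‖x‖ * (C * ‖y‖) :=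
  (norm_inner_le_norm _ _).trans <| mul_le_mul ((T ^ n).le_of_opNorm_le (hC n) x)
    ((T ^ n).le_of_opNorm_le (hC n) y) (norm_nonneg _)
    ((norm_nonneg _).trans ((T ^ n).le_of_opNorm_le (hC n) x))

noncomputable def powInnerSeq (T : H →L[ℂ] H) {C : ℝ} (hC : ∀ n : ℕ, ‖T ^ n‖ ≤ C) (x y : H) :
    ℕ →ᵇ ℂ :=
  ofNormedAddCommGroupDiscrete (fun n => ⟪(T ^ n) x, (T ^ n) y⟫_ℂ) _
    (norm_inner_pow_apply_le T hC x y)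

variable {T : H →L[ℂ] H} {C : ℝ} {hC : ∀ n : ℕ, ‖T ^ n‖ ≤ C}

@[simp]
theorem powInnerSeq_apply (x y : H) (n : ℕ) :
    powInnerSeq T hC x y n = ⟪(T ^ n) x, (T ^ n) y⟫_ℂ := rfl

theorem norm_powInnerSeq_le (x y : H) : ‖powInnerSeq T hC x y‖ ≤ C * ‖x‖ * (C * ‖y‖) :=
  (BoundedContinuousFunction.norm_le
    ((norm_nonneg _).trans (norm_inner_pow_apply_le T hC x y 0))).2
    (norm_inner_pow_apply_le T hC x y)

variable [CompleteSpace H] {L : (ℕ →ᵇ ℂ) →L[ℂ] ℂ}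

noncomputable def asymptoticLimit (L : (ℕ →ᵇ ℂ) →L[ℂ] ℂ) (T : H →L[ℂ] H) {C : ℝ}
    (hC : ∀ n : ℕ, ‖T ^ n‖ ≤ C) : H →L[ℂ] H :=
  InnerProductSpace.continuousLinearMapOfBilin <| LinearMap.mkContinuous₂
    (LinearMap.mk₂'ₛₗ (starRingEnd ℂ) (RingHom.id ℂ) (fun x y => L (powInnerSeq T hC x y))
      (fun x x' y => by rw [← map_add]; congr; ext; simp)
      (fun c x y => by rw [← map_smul]; congr; ext; simp [mul_comm])
      (fun x y y' => by rw [← map_add]; congr; ext; simp)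
      (fun c x y => by rw [← map_smul]; congr; ext; simp))
    (‖L‖ * C ^ 2) fun x y => by
      simp only [LinearMap.mk₂'ₛₗ_apply]
      calc ‖L (powInnerSeq T hC x y)‖ ≤ ‖L‖ * (C * ‖x‖ * (C * ‖y‖)) :=
            L.le_of_opNorm_le_of_le le_rfl (norm_powInnerSeq_le x y)
        _ = ‖L‖ * C ^ 2 * ‖x‖ * ‖y‖ := by ring

theorem inner_asymptoticLimit (x y : H) :
    ⟪asymptoticLimit L T hC x, y⟫_ℂ = L (powInnerSeq T hC x y) :=
  InnerProductSpace.continuousLinearMapOfBilin_apply _ x y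

theorem isLAsymptoticLimit_asymptoticLimit (hL : IsBanachLimit L) :
    IsLAsymptoticLimit L T (asymptoticLimit L T hC) := by
  refine ⟨isPositive_of_inner_nonneg fun x => ?_, fun x y f hf => ?_⟩
  · rw [inner_asymptoticLimit]
    exact hL.nonneg fun n => isPositive_one.inner_nonneg_left _
  · rw [inner_asymptoticLimit]
    congr
    ext n
    rw [hf, ContinuousLinearMap.comp_apply, adjoint_inner_left, powInnerSeq_apply]

namespace IsLAsymptoticLimit

variable {A : H →L[ℂ] H}

theorem inner_eq (hA : IsLAsymptoticLimit L T A) (hC : ∀ n : ℕ, ‖T ^ n‖ ≤ C) (x y : H) :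
    ⟪A x, y⟫_ℂ = L (powInnerSeq T hC x y) :=
  hA.2 x y _ fun n => by rw [powInnerSeq_apply, ContinuousLinearMap.comp_apply, adjoint_inner_left]

theorem re_inner_le (hL : IsBanachLimit L) {S B : H →L[ℂ] H} {C' : ℝ}
    (hA : IsLAsymptoticLimit L T A) (hB : IsLAsymptoticLimit L S B)
    (hC : ∀ n : ℕ, ‖T ^ n‖ ≤ C) (hC' : ∀ n : ℕ, ‖S ^ n‖ ≤ C') {r : ℝ} {z w : H}
    (h : ∀ n, ‖(T ^ n) z‖ ≤ r * ‖(S ^ n) w‖) :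
    RCLike.re ⟪A z, z⟫_ℂ ≤ r ^ 2 * RCLike.re ⟪B w, w⟫_ℂ := by
  have hle : ⟪A z, z⟫_ℂ ≤ ((r ^ 2 : ℝ) : ℂ) * ⟪B w, w⟫_ℂ := by
    rw [hA.inner_eq hC, hB.inner_eq hC', ← smul_eq_mul, ← map_smul]
    refine hL.mono fun n => ?_
    simp only [powInnerSeq_apply, coe_smul, smul_eq_mul, inner_self_eq_norm_sq_to_K,
      RCLike.ofReal_eq_complex_ofReal]
    exact_mod_cast calc ‖(T ^ n) z‖ ^ 2 ≤ (r * ‖(S ^ n) w‖) ^ 2 := by gcongr; exact h n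
      _ = r ^ 2 * ‖(S ^ n) w‖ ^ 2 := mul_pow _ _ _
  simpa only [RCLike.re_to_complex, Complex.re_ofReal_mul] using (Complex.le_def.1 hle).1

end IsLAsymptoticLimit

end AsymptoticLimit

section ReducedMinModulus

variable {H : Type*} [NormedAddCommGroup H] [InnerProductSpace ℂ H] [CompleteSpace H]

/-- `γ(A) > 0` for the reduced minimum modulus `γ`. -/
def ReducedMinModulusPos (A : H →L[ℂ] H) : Prop :=
  ∃ c : ℝ, 0 < c ∧ ∀ x ∈ (LinearMap.ker (A : H →ₗ[ℂ] H))ᗮ, c * ‖x‖ ≤ ‖A x‖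

theorem ReducedMinModulusPos.of_re_inner_le {A B X X' : H →L[ℂ] H} (hA : A.IsPositive)
    (hB : B.IsPositive) (hXX' : X * X' = 1) {α β : ℝ} (hα : 0 ≤ α)
    (hAB : ∀ x, RCLike.re ⟪A (X' x), X' x⟫_ℂ ≤ α * RCLike.re ⟪B x, x⟫_ℂ)
    (hBA : ∀ u, RCLike.re ⟪B (X u), X u⟫_ℂ ≤ β * RCLike.re ⟪A u, u⟫_ℂ)
    (h : ReducedMinModulusPos A) : ReducedMinModulusPos B := by
  obtain ⟨c, hc, hbd⟩ := h
  set K := ‖X‖ ^ 2 * ‖A‖ * α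
  have hK : 0 ≤ K := by positivity
  refine ⟨c ^ 2 / (K + 1), by positivity, fun x hx => ?_⟩
  have : CompleteSpace (LinearMap.ker (A : H →ₗ[ℂ] H)) := A.isClosed_ker.completeSpace_coe
  obtain ⟨u, hu, v, hv, huv⟩ :=
    (LinearMap.ker (A : H →ₗ[ℂ] H)).exists_add_mem_mem_orthogonal (X' x)
  have hAu : A u = 0 := hu
  have hBXu : B (X (-u)) = 0 :=
    hB.apply_eq_zero_of_re_inner_le_zero <| (hBA (-u)).trans_eq (by simp [hAu])
  have hxv : ‖x‖ ≤ ‖X‖ * ‖v‖ := by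
    have hXv : X v = x + X (-u) := by
      rw [map_neg, ← sub_eq_add_neg, eq_sub_iff_add_eq, add_comm, ← map_add, ← huv,
        ← mul_apply_eq_comp, hXX', one_apply_eq_self]
    have hpyth := norm_add_sq_eq_norm_sq_add_norm_sq_of_inner_eq_zero _ _
      (Submodule.inner_left_of_mem_orthogonal hBXu hx)
    rw [← hXv] at hpyth
    calc ‖x‖ ≤ ‖X v‖ := by nlinarith [norm_nonneg x, norm_nonneg (X v), norm_nonneg (X (-u))]
      _ ≤ ‖X‖ * ‖v‖ := X.le_opNorm v
  have hform : RCLike.re ⟪A (X' x), X' x⟫_ℂ = RCLike.re ⟪A v, v⟫_ℂ := by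
    rw [huv, map_add, hAu, zero_add, inner_add_right, hA.inner_left_eq_inner_right, hAu,
      inner_zero_right, zero_add]
  have key : c ^ 2 * ‖x‖ ^ 2 ≤ K * ‖B x‖ * ‖x‖ :=
    calc c ^ 2 * ‖x‖ ^ 2 ≤ c ^ 2 * (‖X‖ * ‖v‖) ^ 2 := by gcongr
      _ = ‖X‖ ^ 2 * (c * ‖v‖) ^ 2 := by ring
      _ ≤ ‖X‖ ^ 2 * ‖A v‖ ^ 2 := by gcongr; exact hbd v hv
      _ ≤ ‖X‖ ^ 2 * (‖A‖ * RCLike.re ⟪A v, v⟫_ℂ) := by gcongr; exact hA.norm_apply_sq_le v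
      _ ≤ ‖X‖ ^ 2 * (‖A‖ * (α * RCLike.re ⟪B x, x⟫_ℂ)) := by gcongr; exact hform ▸ hAB x
      _ ≤ ‖X‖ ^ 2 * (‖A‖ * (α * (‖B x‖ * ‖x‖))) := by
          gcongr; exact (RCLike.re_le_norm _).trans (norm_inner_le_norm _ _)
      _ = K * ‖B x‖ * ‖x‖ := by ring
  rcases (norm_nonneg x).eq_or_lt with hx0 | hx0
  · rw [← hx0, mul_zero]; exact norm_nonneg _
  rw [div_mul_eq_mul_div, div_le_iff₀ (by positivity)]
  nlinarith [norm_nonneg (B x)]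

theorem ReducedMinModulusPos.of_semiconjBy {T S X X' : H →L[ℂ] H} {CT CS : ℝ}
    (hCT : ∀ n : ℕ, ‖T ^ n‖ ≤ CT) (hCS : ∀ n : ℕ, ‖S ^ n‖ ≤ CS) (hXX' : X * X' = 1)
    (hX'S : SemiconjBy X' S T) (hXT : SemiconjBy X T S) :
    (∃ (L : (ℕ →ᵇ ℂ) →L[ℂ] ℂ) (A : H →L[ℂ] H), IsBanachLimit L ∧ IsLAsymptoticLimit L T A ∧
      ReducedMinModulusPos A) →
    ∃ (L : (ℕ →ᵇ ℂ) →L[ℂ] ℂ) (B : H →L[ℂ] H), IsBanachLimit L ∧ IsLAsymptoticLimit L S B ∧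
      ReducedMinModulusPos B := by
  rintro ⟨L, A, hL, hA, hγ⟩
  have hB := isLAsymptoticLimit_asymptoticLimit (hC := hCS) hL
  refine ⟨L, _, hL, hB, hγ.of_re_inner_le hA.1 hB.1 hXX' (sq_nonneg ‖X'‖) (β := ‖X‖ ^ 2)
    (fun x => ?_) (fun u => ?_)⟩
  · refine hA.re_inner_le hL hB hCT hCS fun n => ?_
    rw [← mul_apply_eq_comp, ← (hX'S.pow_right n).eq, mul_apply_eq_comp]
    exact X'.le_opNorm _
  · refine hB.re_inner_le hL hA hCS hCT fun n => ?_
    rw [← mul_apply_eq_comp, ← (hXT.pow_right n).eq, mul_apply_eq_comp]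
    exact X.le_opNorm _

end ReducedMinModulus

theorem stmt14_general {H : Type*} [NormedAddCommGroup H] [InnerProductSpace ℂ H] [CompleteSpace H]
    (T S : H →L[ℂ] H)
    (hT : ∃ C : ℝ, ∀ n : ℕ, ‖T ^ n‖ ≤ C) (hS : ∃ C : ℝ, ∀ n : ℕ, ‖S ^ n‖ ≤ C)
    (X X' : H →L[ℂ] H) (hX : X ∘L X' = 1) (hX' : X' ∘L X = 1)
    (hsim : S = X ∘L T ∘L X') :
    (∃ (L : (ℕ →ᵇ ℂ) →L[ℂ] ℂ) (A : H →L[ℂ] H), IsBanachLimit L ∧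
        IsLAsymptoticLimit L T A ∧
        ∃ c : ℝ, 0 < c ∧ ∀ x ∈ (LinearMap.ker (A : H →ₗ[ℂ] H))ᗮ, c * ‖x‖ ≤ ‖A x‖) ↔
    (∃ (L : (ℕ →ᵇ ℂ) →L[ℂ] ℂ) (B : H →L[ℂ] H), IsBanachLimit L ∧
        IsLAsymptoticLimit L S B ∧
        ∃ c : ℝ, 0 < c ∧ ∀ x ∈ (LinearMap.ker (B : H →ₗ[ℂ] H))ᗮ, c * ‖x‖ ≤ ‖B x‖) := by
  obtain ⟨CT, hCT⟩ := hT
  obtain ⟨CS, hCS⟩ := hS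
  have hX'X : X' * X = 1 := hX'
  have hS_eq : S = X * T * X' := by rw [hsim, mul_assoc]; rfl
  have hX'S : SemiconjBy X' S T := by
    rw [SemiconjBy, hS_eq, ← mul_assoc, ← mul_assoc, hX'X, one_mul]
  have hXT : SemiconjBy X T S := by
    rw [SemiconjBy, hS_eq, mul_assoc, mul_assoc, hX'X, mul_one]
  exact ⟨ReducedMinModulusPos.of_semiconjBy hCT hCS hX hX'S hXT,
    ReducedMinModulusPos.of_semiconjBy hCS hCT hX'X hXT hX'S⟩

/-- If `T` and `S` are power bounded, neither of class `C₀·`, and similar to each other,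
then `γ(A_{T,L}) > 0` for some Banach limit `L` if and only if `γ(A_{S,L}) > 0` for some
Banach limit `L`.  (Here `γ(A) > 0` is expressed as: `A` is bounded below on `(ker A)ᗮ`.) -/
theorem stmt14 {H : Type*} [NormedAddCommGroup H] [InnerProductSpace ℂ H] [CompleteSpace H]
    (T S : H →L[ℂ] H)
    (hT : ∃ C : ℝ, ∀ n : ℕ, ‖T ^ n‖ ≤ C) (hS : ∃ C : ℝ, ∀ n : ℕ, ‖S ^ n‖ ≤ C)
    (hT0 : ∃ x : H, ¬ Tendsto (fun n : ℕ => ‖(T ^ n) x‖) atTop (𝓝 0))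
    (hS0 : ∃ x : H, ¬ Tendsto (fun n : ℕ => ‖(S ^ n) x‖) atTop (𝓝 0))
    (X X' : H →L[ℂ] H) (hX : X ∘L X' = 1) (hX' : X' ∘L X = 1)
    (hsim : S = X ∘L T ∘L X') :
    (∃ (L : (ℕ →ᵇ ℂ) →L[ℂ] ℂ) (A : H →L[ℂ] H), IsBanachLimit L ∧
        IsLAsymptoticLimit L T A ∧
        ∃ c : ℝ, 0 < c ∧ ∀ x ∈ (LinearMap.ker (A : H →ₗ[ℂ] H))ᗮ, c * ‖x‖ ≤ ‖A x‖) ↔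
    (∃ (L : (ℕ →ᵇ ℂ) →L[ℂ] ℂ) (B : H →L[ℂ] H), IsBanachLimit L ∧
        IsLAsymptoticLimit L S B ∧
        ∃ c : ℝ, 0 < c ∧ ∀ x ∈ (LinearMap.ker (B : H →ₗ[ℂ] H))ᗮ, c * ‖x‖ ≤ ‖B x‖) :=
  stmt14_general T S hT hS X X' hX hX' hsim
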